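/- arXiv:2102.01309 — 3 statements merged into one kernel-verified Lean document; each statement's English description precedes it below -/
import Mathlib

section
/- Let $y_1,\dots,y_n \in \mathbb{R}$, $a_i^t \ge 0$, and $\alpha_t = \sum_{i=1}^n a_i^t y_i$. Then $\sum_{t=1}^T \alpha_t^2 \le \max_{1\le i\le n}\left\{\sum_{t=1}^T a_i^t \left(\sum_{j=1}^n a_j^t\right)\right\} \cdot \sum_{i=1}^n y_i^2$. -/
open Finset

theorem sq_sum_mul_le_sum_mul_sum_mul_sq {ι : Type*} (s : Finset ι) {w : ι → ℝ}
    (hw : ∀ i ∈ s, 0 ≤ w i) (y : ι → ℝ) :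
    (∑ i ∈ s, w i * y i) ^ 2 ≤ (∑ i ∈ s, w i) * ∑ i ∈ s, w i * y i ^ 2 :=
  sum_sq_le_sum_mul_sum_of_sq_le_mul s hw (fun i hi => mul_nonneg (hw i hi) (sq_nonneg _))
    fun i _ => (by ring : (w i * y i) ^ 2 = w i * (w i * y i ^ 2)).le

theorem sum_sq_sum_mul_le_mul_sum_sq {ι κ : Type*} [Fintype ι] [Fintype κ]
    {a : ι → κ → ℝ} (ha : ∀ i t, 0 ≤ a i t) (y : ι → ℝ) {M : ℝ}
    (hM : ∀ i, ∑ t, a i t * ∑ j, a j t ≤ M) :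
    ∑ t, (∑ i, a i t * y i) ^ 2 ≤ M * ∑ i, y i ^ 2 :=
  calc ∑ t, (∑ i, a i t * y i) ^ 2 ≤ ∑ t, (∑ j, a j t) * ∑ i, a i t * y i ^ 2 :=
        sum_le_sum fun t _ => sq_sum_mul_le_sum_mul_sum_mul_sq _ (fun i _ => ha i t) y
    _ = ∑ i, (∑ t, a i t * ∑ j, a j t) * y i ^ 2 := by
        simp only [mul_sum, sum_mul]
        rw [sum_comm]
        exact sum_congr rfl fun i _ => sum_congr rfl fun t _ => sum_congr rfl fun j _ => by ring
    _ ≤ ∑ i, M * y i ^ 2 := sum_le_sum fun i _ => mul_le_mul_of_nonneg_right (hM i) (sq_nonneg _)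
    _ = M * ∑ i, y i ^ 2 := (mul_sum ..).symm

theorem stmt1 (n T : ℕ) (y : Fin n → ℝ) (a : Fin n → Fin T → ℝ)
    (ha : ∀ i t, 0 ≤ a i t)
    (α : Fin T → ℝ) (hα : ∀ t, α t = ∑ i, a i t * y i) :
    ∑ t, (α t) ^ 2 ≤ (⨆ i : Fin n, ∑ t, a i t * ∑ j, a j t) * ∑ i, (y i) ^ 2 := by
  simp only [hα]
  exact sum_sq_sum_mul_le_mul_sum_sq ha y fun i =>
    le_ciSup (Finite.bddAbove_range fun i => ∑ t, a i t * ∑ j, a j t) i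
end

section
/- Let $A, B$ be positive definite real symmetric matrices, and define $\delta_\infty(A,B) := \|\log(A^{-1/2} B A^{-1/2})\|$ (operator norm of the matrix logarithm). If $L \preceq A \preceq U$ and $L \preceq B \preceq U$ for positive definite matrices $L, U$, then $\delta_\infty(A,B) \le \log\left(\frac{\lambda_{\max}(U)}{\lambda_{\min}(L)}\right)$. -/
open scoped Matrix.Norms.L2Operator Classical
open Matrix

noncomputable section

/-- Loewner order: `A ⪯ B` iff `B - A` is positive semidefinite. -/
def Loewner {n : ℕ} (A B : Matrix (Fin n) (Fin n) ℝ) : Prop := (B - A).PosSemidef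

/-- Matrix logarithm of a Hermitian matrix (junk value `0` otherwise). -/
def mlog {n : ℕ} (M : Matrix (Fin n) (Fin n) ℝ) : Matrix (Fin n) (Fin n) ℝ :=
  if h : M.IsHermitian then h.cfc Real.log else 0

/-- Inverse square root `M^{-1/2}` of a Hermitian (positive definite) matrix. -/
def minvSqrt {n : ℕ} (M : Matrix (Fin n) (Fin n) ℝ) : Matrix (Fin n) (Fin n) ℝ :=
  if h : M.IsHermitian then h.cfc (fun x => (Real.sqrt x)⁻¹) else 0

/-- The invariant metric `δ∞(A,B) = ‖log (A^{-1/2} B A^{-1/2})‖` (spectral norm). -/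
def deltaInf {n : ℕ} (A B : Matrix (Fin n) (Fin n) ℝ) : ℝ :=
  ‖mlog (minvSqrt A * B * minvSqrt A)‖

/-- Largest eigenvalue of a Hermitian matrix. -/
def lmax {n : ℕ} (M : Matrix (Fin n) (Fin n) ℝ) : ℝ :=
  if h : M.IsHermitian then ⨆ i, h.eigenvalues i else 0

/-- Smallest eigenvalue of a Hermitian matrix. -/
def lmin {n : ℕ} (M : Matrix (Fin n) (Fin n) ℝ) : ℝ :=
  if h : M.IsHermitian then ⨅ i, h.eigenvalues i else 0

/-- The Riccati operator `F_{Q,R}(P)`. -/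
def Ricc {n m : ℕ} (A : Matrix (Fin n) (Fin n) ℝ) (B : Matrix (Fin n) (Fin m) ℝ)
    (Q : Matrix (Fin n) (Fin n) ℝ) (R : Matrix (Fin m) (Fin m) ℝ)
    (P : Matrix (Fin n) (Fin n) ℝ) : Matrix (Fin n) (Fin n) ℝ :=
  Q + Aᵀ * P * A - Aᵀ * P * B * (R + Bᵀ * P * B)⁻¹ * Bᵀ * P * A

/-! With `m = λ_min(L)` and `M = λ_max(U)`, both `A` and `B` lie between `m • 1` and `M • 1`, so
`B ≤ t • A` and `A ≤ t • B` for `t = M / m`. Conjugating by `C = A^{-1/2}` preserves the Loewner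
order and sends `A` to `1`, hence `t⁻¹ • 1 ≤ C B C ≤ t • 1`: the spectrum of `C B C` lies in
`[t⁻¹, t]`, that of its logarithm in `[-log t, log t]`, and the functional calculus of real
matrices is isometric for the spectral norm. -/

open scoped MatrixOrder

section OrderedModule

variable {E : Type*} [AddCommGroup E] [PartialOrder E] [Module ℝ E] [PosSMulMono ℝ E]

lemma le_div_smul_of_smul_le_of_le_smul {e a b : E} {m M : ℝ} (hm : 0 < m) (hM : 0 ≤ M)
    (ha : m • e ≤ a) (hb : b ≤ M • e) : b ≤ (M / m) • a :=
  calc b ≤ M • e := hb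
    _ = (M / m) • m • e := by rw [smul_smul, div_mul_cancel₀ _ hm.ne']
    _ ≤ (M / m) • a := smul_le_smul_of_nonneg_left ha (div_nonneg hM hm.le)

end OrderedModule

section FunctionalCalculus

variable {𝔄 : Type*} [NormedRing 𝔄] [StarRing 𝔄] [NormedAlgebra ℝ 𝔄]
  [IsometricContinuousFunctionalCalculus ℝ 𝔄 IsSelfAdjoint]

lemma norm_cfc_log_le_of_spectrum_subset_Icc [Nontrivial 𝔄] {s : 𝔄} {t : ℝ}
    (ht : 0 < t) (hs : IsSelfAdjoint s) (hspec : spectrum ℝ s ⊆ Set.Icc t⁻¹ t) :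
    ‖cfc Real.log s‖ ≤ Real.log t := by
  obtain ⟨x₀, hx₀⟩ := ContinuousFunctionalCalculus.spectrum_nonempty (R := ℝ) s hs
  have h1t : 1 ≤ t := by
    have := (hspec hx₀).1.trans (hspec hx₀).2
    rwa [inv_le_iff_one_le_mul₀ ht, ← sq, one_le_sq_iff_one_le_abs, abs_of_pos ht] at this
  refine norm_cfc_le (Real.log_nonneg h1t) fun x hx => ?_
  obtain ⟨hlo, hhi⟩ := hspec hx
  have hx0 : 0 < x := (inv_pos.2 ht).trans_le hlo
  rw [Real.norm_eq_abs, abs_le, ← Real.log_inv]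
  exact ⟨Real.log_le_log (inv_pos.2 ht) hlo, Real.log_le_log hx0 hhi⟩

variable [PartialOrder 𝔄] [StarOrderedRing 𝔄] [PosSMulMono ℝ 𝔄] [NonnegSpectrumClass ℝ 𝔄]

lemma spectrum_conj_subset_Icc {a b c : 𝔄} {t : ℝ} (ht : 0 < t) (hc : IsSelfAdjoint c)
    (hcac : c * a * c = 1) (hb : IsSelfAdjoint b) (hba : b ≤ t • a) (hab : a ≤ t • b) :
    spectrum ℝ (c * b * c) ⊆ Set.Icc t⁻¹ t := by
  have hs : IsSelfAdjoint (c * b * c) := hb.conjugate_self hc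
  have conj_smul (x : 𝔄) : c * (t • x) * c = t • (c * x * c) := by
    rw [mul_smul_comm, smul_mul_assoc]
  have hupper : c * b * c ≤ algebraMap ℝ 𝔄 t := by
    simpa [conj_smul, hcac, Algebra.algebraMap_eq_smul_one] using hc.conjugate_le_conjugate hba
  have hlower : algebraMap ℝ 𝔄 t⁻¹ ≤ c * b * c := by
    rw [Algebra.algebraMap_eq_smul_one, inv_smul_le_iff_of_pos ht]
    simpa [conj_smul, hcac] using hc.conjugate_le_conjugate hab
  intro x hx
  exact ⟨(algebraMap_le_iff_le_spectrum (R := ℝ) hs).1 hlower x hx,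
    (le_algebraMap_iff_spectrum_le (R := ℝ) hs).1 hupper x hx⟩

end FunctionalCalculus

section Matrix

variable {n : ℕ}

lemma Loewner.le {A B : Matrix (Fin n) (Fin n) ℝ} (h : Loewner A B) : A ≤ B := h

lemma minvSqrt_eq_cfc {A : Matrix (Fin n) (Fin n) ℝ} (hA : A.IsHermitian) :
    minvSqrt A = cfc (fun x => (√x)⁻¹) A := by
  rw [minvSqrt, dif_pos hA, hA.cfc_eq]

lemma mlog_eq_cfc {A : Matrix (Fin n) (Fin n) ℝ} (hA : A.IsHermitian) :
    mlog A = cfc Real.log A := by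
  rw [mlog, dif_pos hA, hA.cfc_eq]

lemma isSelfAdjoint_minvSqrt {A : Matrix (Fin n) (Fin n) ℝ} (hA : A.IsHermitian) :
    IsSelfAdjoint (minvSqrt A) := by
  rw [minvSqrt_eq_cfc hA]
  exact cfc_predicate _ A

lemma minvSqrt_mul_self_mul_minvSqrt {A : Matrix (Fin n) (Fin n) ℝ} (hA : A.PosDef) :
    minvSqrt A * A * minvSqrt A = 1 := by
  have hpos : ∀ x ∈ spectrum ℝ A, 0 < x := fun _ => hA.isStrictlyPositive.spectrum_pos
  have hcont : ContinuousOn (fun x : ℝ => (√x)⁻¹) (spectrum ℝ A) :=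
    Real.continuous_sqrt.continuousOn.inv₀ fun x hx => (Real.sqrt_pos.2 (hpos x hx)).ne'
  rw [minvSqrt_eq_cfc hA.1]
  nth_rw 2 [← cfc_id' ℝ A hA.1.isSelfAdjoint]
  rw [← cfc_mul _ _ A hcont, ← cfc_mul (fun x => (√x)⁻¹ * x) _ A (hcont.mul continuousOn_id) hcont,
    ← cfc_one ℝ A hA.1.isSelfAdjoint]
  refine cfc_congr fun x hx => ?_
  have hsqrt : √x ≠ 0 := (Real.sqrt_pos.2 (hpos x hx)).ne'
  simp only [Pi.one_apply]
  field_simp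
  exact (Real.sq_sqrt (hpos x hx).le).symm

lemma lmin_smul_one_le {M : Matrix (Fin n) (Fin n) ℝ} (hM : M.IsHermitian) : lmin M • 1 ≤ M := by
  rw [← Algebra.algebraMap_eq_smul_one]
  refine algebraMap_le_of_le_spectrum (fun x hx => ?_) hM.isSelfAdjoint
  obtain ⟨i, rfl⟩ := hM.spectrum_real_eq_range_eigenvalues ▸ hx
  rw [lmin, dif_pos hM]
  exact ciInf_le (Set.finite_range _).bddBelow i

lemma le_lmax_smul_one {M : Matrix (Fin n) (Fin n) ℝ} (hM : M.IsHermitian) : M ≤ lmax M • 1 := by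
  rw [← Algebra.algebraMap_eq_smul_one]
  refine le_algebraMap_of_spectrum_le (fun x hx => ?_) hM.isSelfAdjoint
  obtain ⟨i, rfl⟩ := hM.spectrum_real_eq_range_eigenvalues ▸ hx
  rw [lmax, dif_pos hM]
  exact le_ciSup (Set.finite_range _).bddAbove i

lemma lmin_pos [Nonempty (Fin n)] {M : Matrix (Fin n) (Fin n) ℝ} (hM : M.PosDef) :
    0 < lmin M := by
  obtain ⟨i, hi⟩ := exists_eq_ciInf_of_finite (f := hM.1.eigenvalues)
  rw [lmin, dif_pos hM.1, ← hi]
  exact hM.eigenvalues_pos i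

lemma lmax_pos [Nonempty (Fin n)] {M : Matrix (Fin n) (Fin n) ℝ} (hM : M.PosDef) :
    0 < lmax M := by
  rw [lmax, dif_pos hM.1]
  exact (hM.eigenvalues_pos (Classical.arbitrary _)).trans_le
    (le_ciSup (Set.finite_range _).bddAbove _)

end Matrix

theorem stmt4 {n : ℕ} (A B L U : Matrix (Fin n) (Fin n) ℝ)
    (hA : A.PosDef) (hB : B.PosDef) (hL : L.PosDef) (hU : U.PosDef)
    (hLA : Loewner L A) (hAU : Loewner A U) (hLB : Loewner L B) (hBU : Loewner B U) :
    deltaInf A B ≤ Real.log (lmax U / lmin L) := by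
  rcases isEmpty_or_nonempty (Fin n) with hn | hn
  · simp [deltaInf, Subsingleton.elim (mlog _) 0, lmax, lmin]
  have hm : 0 < lmin L := lmin_pos hL
  have hM : 0 < lmax U := lmax_pos hU
  have hmA : lmin L • 1 ≤ A := (lmin_smul_one_le hL.1).trans hLA.le
  have hmB : lmin L • 1 ≤ B := (lmin_smul_one_le hL.1).trans hLB.le
  have hAM : A ≤ lmax U • 1 := hAU.le.trans (le_lmax_smul_one hU.1)
  have hBM : B ≤ lmax U • 1 := hBU.le.trans (le_lmax_smul_one hU.1)
  have hC := isSelfAdjoint_minvSqrt hA.1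
  have hS : IsSelfAdjoint (minvSqrt A * B * minvSqrt A) := hB.1.isSelfAdjoint.conjugate_self hC
  rw [deltaInf, mlog_eq_cfc hS]
  exact norm_cfc_log_le_of_spectrum_subset_Icc (by positivity) hS <|
    spectrum_conj_subset_Icc (by positivity) hC (minvSqrt_mul_self_mul_minvSqrt hA)
      hB.1.isSelfAdjoint (le_div_smul_of_smul_le_of_le_smul hm hM.le hmA hBM)
      (le_div_smul_of_smul_le_of_le_smul hm hM.le hmB hAM)
end
end

section
/- Let $F_{Q,R}(P)$ be the Riccati operator and suppose $0 \prec Q_1 \preceq Q_2$, $0 \prec R_1 \preceq R_2$, and $0 \preceq P_1 \preceq P_2$. Then $F_{Q_1,R_1}(P_1) \preceq F_{Q_2,R_2}(P_2)$. -/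
open scoped Matrix.Norms.L2Operator Classical
open Matrix

noncomputable section

/-
The Riccati operator is the minimum of the closed-loop cost
`Q + Kᵀ R K + (A + B K)ᵀ P (A + B K)` over feedback gains `K`: completing the square gives
`cost(K) = F_{Q,R}(P) + (K - K*)ᵀ (R + Bᵀ P B) (K - K*)` with `K* = -(R + Bᵀ P B)⁻¹ Bᵀ P A`.
The cost of each fixed gain is monotone in `(Q, R, P)`, so
`F_{Q₁,R₁}(P₁) ⪯ cost₁(K₂*) ⪯ cost₂(K₂*) = F_{Q₂,R₂}(P₂)`.
-/

lemma Loewner.trans {n : ℕ} {X Y Z : Matrix (Fin n) (Fin n) ℝ}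
    (hXY : Loewner X Y) (hYZ : Loewner Y Z) : Loewner X Z := by
  simpa [Loewner] using Matrix.PosSemidef.add hYZ hXY

lemma Loewner.transpose_mul_mul {n k : ℕ} {X Y : Matrix (Fin n) (Fin n) ℝ}
    (h : Loewner X Y) (M : Matrix (Fin n) (Fin k) ℝ) : Loewner (Mᵀ * X * M) (Mᵀ * Y * M) := by
  simpa [Loewner, Matrix.mul_sub, Matrix.sub_mul] using h.conjTranspose_mul_mul_same M

lemma Loewner.add {n : ℕ} {X₁ Y₁ X₂ Y₂ : Matrix (Fin n) (Fin n) ℝ}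
    (h₁ : Loewner X₁ Y₁) (h₂ : Loewner X₂ Y₂) : Loewner (X₁ + X₂) (Y₁ + Y₂) := by
  simpa [Loewner, add_sub_add_comm] using Matrix.PosSemidef.add h₁ h₂

lemma loewner_add_right {n : ℕ} {X Y : Matrix (Fin n) (Fin n) ℝ} (h : Y.PosSemidef) :
    Loewner X (X + Y) := by
  simpa [Loewner] using h

lemma Matrix.PosSemidef.transpose_mul_mul {ι κ : Type*} [Fintype ι] [Fintype κ]
    {P : Matrix ι ι ℝ} (hP : P.PosSemidef) (M : Matrix ι κ ℝ) : (Mᵀ * P * M).PosSemidef := by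
  simpa using hP.conjTranspose_mul_mul_same M

lemma transpose_mul_mul_add_inv_mul {ι κ : Type*} [Fintype ι] [DecidableEq ι] [Fintype κ]
    {S : Matrix ι ι ℝ} (hS : IsUnit S.det) (hST : Sᵀ = S) (K M : Matrix ι κ ℝ) :
    (K + S⁻¹ * M)ᵀ * S * (K + S⁻¹ * M)
      = Kᵀ * S * K + Kᵀ * M + Mᵀ * K + Mᵀ * S⁻¹ * M := by
  have hSiT : S⁻¹ᵀ = S⁻¹ := by rw [transpose_nonsing_inv, hST]
  simp only [transpose_add, transpose_mul, hSiT, Matrix.add_mul, Matrix.mul_add]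
  simp only [Matrix.mul_assoc, mul_nonsing_inv_cancel_left _ _ hS,
    nonsing_inv_mul_cancel_left _ _ hS]
  abel

def lqCost {n m : ℕ} (A : Matrix (Fin n) (Fin n) ℝ) (B : Matrix (Fin n) (Fin m) ℝ)
    (Q : Matrix (Fin n) (Fin n) ℝ) (R : Matrix (Fin m) (Fin m) ℝ)
    (P : Matrix (Fin n) (Fin n) ℝ) (K : Matrix (Fin m) (Fin n) ℝ) : Matrix (Fin n) (Fin n) ℝ :=
  Q + Kᵀ * R * K + (A + B * K)ᵀ * P * (A + B * K)

def optimalGain {n m : ℕ} (A : Matrix (Fin n) (Fin n) ℝ) (B : Matrix (Fin n) (Fin m) ℝ)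
    (R : Matrix (Fin m) (Fin m) ℝ) (P : Matrix (Fin n) (Fin n) ℝ) : Matrix (Fin m) (Fin n) ℝ :=
  -((R + Bᵀ * P * B)⁻¹ * (Bᵀ * P * A))

section Riccati

variable {n m : ℕ} (A : Matrix (Fin n) (Fin n) ℝ) (B : Matrix (Fin n) (Fin m) ℝ)
  (Q : Matrix (Fin n) (Fin n) ℝ) (R : Matrix (Fin m) (Fin m) ℝ) (P : Matrix (Fin n) (Fin n) ℝ)

lemma lqCost_eq_ricc_add (K : Matrix (Fin m) (Fin n) ℝ) (hR : R.IsHermitian) (hP : P.IsHermitian)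
    (hS : IsUnit (R + Bᵀ * P * B).det) :
    lqCost A B Q R P K = Ricc A B Q R P
      + (K - optimalGain A B R P)ᵀ * (R + Bᵀ * P * B) * (K - optimalGain A B R P) := by
  rw [isHermitian_iff_isSymm] at hR hP
  have hST : (R + Bᵀ * P * B)ᵀ = R + Bᵀ * P * B := by simp [Matrix.mul_assoc, hR.eq, hP.eq]
  have hMT : (Bᵀ * P * A)ᵀ = Aᵀ * P * B := by simp [Matrix.mul_assoc, hP.eq]
  rw [optimalGain, sub_neg_eq_add, transpose_mul_mul_add_inv_mul hS hST, hMT, lqCost, Ricc]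
  simp only [transpose_add, transpose_mul, Matrix.add_mul, Matrix.mul_add]
  simp only [Matrix.mul_assoc]
  abel

lemma lqCost_optimalGain (hR : R.IsHermitian) (hP : P.IsHermitian)
    (hS : IsUnit (R + Bᵀ * P * B).det) :
    lqCost A B Q R P (optimalGain A B R P) = Ricc A B Q R P := by
  simp [lqCost_eq_ricc_add A B Q R P _ hR hP hS]

lemma ricc_loewner_lqCost (K : Matrix (Fin m) (Fin n) ℝ) (hR : R.IsHermitian) (hP : P.IsHermitian)
    (hS : (R + Bᵀ * P * B).PosDef) : Loewner (Ricc A B Q R P) (lqCost A B Q R P K) := by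
  rw [lqCost_eq_ricc_add A B Q R P K hR hP (isUnit_iff_ne_zero.mpr hS.det_pos.ne')]
  exact loewner_add_right (hS.posSemidef.transpose_mul_mul _)

end Riccati

lemma lqCost_mono {n m : ℕ} (A : Matrix (Fin n) (Fin n) ℝ) (B : Matrix (Fin n) (Fin m) ℝ)
    {Q₁ Q₂ : Matrix (Fin n) (Fin n) ℝ} {R₁ R₂ : Matrix (Fin m) (Fin m) ℝ}
    {P₁ P₂ : Matrix (Fin n) (Fin n) ℝ} (hQ : Loewner Q₁ Q₂) (hR : Loewner R₁ R₂)
    (hP : Loewner P₁ P₂) (K : Matrix (Fin m) (Fin n) ℝ) :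
    Loewner (lqCost A B Q₁ R₁ P₁ K) (lqCost A B Q₂ R₂ P₂ K) :=
  (hQ.add (hR.transpose_mul_mul K)).add (hP.transpose_mul_mul (A + B * K))

theorem stmt10_general {n m : ℕ} (A : Matrix (Fin n) (Fin n) ℝ) (B : Matrix (Fin n) (Fin m) ℝ)
    (Q₁ Q₂ : Matrix (Fin n) (Fin n) ℝ) (R₁ R₂ : Matrix (Fin m) (Fin m) ℝ)
    (P₁ P₂ : Matrix (Fin n) (Fin n) ℝ)
    (hQ : Loewner Q₁ Q₂)
    (hR₁ : R₁.PosDef) (hR : Loewner R₁ R₂)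
    (hP₁ : P₁.PosSemidef) (hP₂ : P₂.PosSemidef) (hP : Loewner P₁ P₂) :
    Loewner (Ricc A B Q₁ R₁ P₁) (Ricc A B Q₂ R₂ P₂) := by
  have hR₂ : R₂.PosDef := by simpa using hR₁.add_posSemidef hR
  have hS₁ := hR₁.add_posSemidef (hP₁.transpose_mul_mul B)
  have hS₂ := hR₂.add_posSemidef (hP₂.transpose_mul_mul B)
  rw [← lqCost_optimalGain A B Q₂ R₂ P₂ hR₂.isHermitian hP₂.isHermitian
    (isUnit_iff_ne_zero.mpr hS₂.det_pos.ne')]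
  exact (ricc_loewner_lqCost A B Q₁ R₁ P₁ _ hR₁.isHermitian hP₁.isHermitian hS₁).trans
    (lqCost_mono A B hQ hR hP _)

theorem stmt10 {n m : ℕ} (A : Matrix (Fin n) (Fin n) ℝ) (B : Matrix (Fin n) (Fin m) ℝ)
    (Q₁ Q₂ : Matrix (Fin n) (Fin n) ℝ) (R₁ R₂ : Matrix (Fin m) (Fin m) ℝ)
    (P₁ P₂ : Matrix (Fin n) (Fin n) ℝ)
    (hQ₁ : Q₁.PosDef) (hQ : Loewner Q₁ Q₂)
    (hR₁ : R₁.PosDef) (hR : Loewner R₁ R₂)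
    (hP₁ : P₁.PosSemidef) (hP₂ : P₂.PosSemidef) (hP : Loewner P₁ P₂) :
    Loewner (Ricc A B Q₁ R₁ P₁) (Ricc A B Q₂ R₂ P₂) :=
  stmt10_general A B Q₁ Q₂ R₁ R₂ P₁ P₂ hQ hR₁ hR hP₁ hP₂ hP
end
end
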